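/- Let X be a real Banach space that is isomorphic to a Hilbert space, i.e., there exist a real Hilbert space H and a continuous linear equivalence X ≃ H. Then X admits a Hilbert-Schauder frame {(x_n, f_n)}_{n∈ℕ} with Hilbert-Schauder frame operator S such that, with Y the norm-closed linear span of {S x_n : n ∈ ℕ} in X*, there is a bounded linear operator T : Y → Y* for which {(S x_n, T(S x_n))}_{n∈ℕ} is a Schauder frame of Y (i.e., for every f ∈ Y the partial sums Σ_{n≤N} (T(S x_n))(f) · S x_n converge to f in norm). -/

import Mathlib

/-! Transport a Parseval frame `u` of `H` (a Hilbert basis, countable by separability, padded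
with zeros to be indexed by `ℕ`) along `e`: with `x n = e⁻¹ (u n)` and `S v w = ⟪e v, e w⟫`
one gets `v = ∑ S (x n) v • x n`. By the Riesz representation theorem `S` is an isomorphism
`X ≃ X*` sending `x n` to the image of `u n` under `H ≃ X*`, so `(S (x n))` is again a
transported Parseval frame; its closed span `Y` is all of `X*`, and the same construction for
`Y ≃ H` yields `T`. -/

open Filter Topology

/-- A Schauder frame of a real Banach space `X`: for every `v ∈ X`, the partial sums
`∑_{j < N} f j (v) • x j` converge to `v` in norm. -/
def SchauderFrame {X : Type*} [NormedAddCommGroup X] [NormedSpace ℝ X]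
    (x : ℕ → X) (f : ℕ → X →L[ℝ] ℝ) : Prop :=
  ∀ v : X, Tendsto (fun N => ∑ j ∈ Finset.range N, f j v • x j) atTop (𝓝 v)

/-- The norm-closed linear span in `X*` of the range of a sequence of functionals. -/
noncomputable def closedSpan {X : Type*} [NormedAddCommGroup X] [NormedSpace ℝ X]
    (F : ℕ → X →L[ℝ] ℝ) : Submodule ℝ (X →L[ℝ] ℝ) :=
  (Submodule.span ℝ (Set.range F)).topologicalClosure

noncomputable instance closedSpan_addCommGroup {X : Type*} [NormedAddCommGroup X] [NormedSpace ℝ X]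
    (F : ℕ → X →L[ℝ] ℝ) : AddCommGroup (closedSpan F) :=
  Submodule.addCommGroup _

instance closedSpan_isTopologicalAddGroup {X : Type*} [NormedAddCommGroup X] [NormedSpace ℝ X]
    (F : ℕ → X →L[ℝ] ℝ) : IsTopologicalAddGroup (closedSpan F) :=
  Submodule.topologicalAddGroup _

open RealInnerProductSpace

theorem Orthonormal.countable {𝕜 E ι : Type*} [RCLike 𝕜] [NormedAddCommGroup E]
    [InnerProductSpace 𝕜 E] [TopologicalSpace.SeparableSpace E] {v : ι → E}
    (hv : Orthonormal 𝕜 v) : Countable ι := by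
  refine Pairwise.countable_of_isOpen_disjoint (s := fun i => Metric.ball (v i) (1 / 2))
    (fun i j hij => Metric.ball_disjoint_ball ?_) (fun _ => Metric.isOpen_ball)
    (fun i => ⟨v i, Metric.mem_ball_self one_half_pos⟩)
  have hsq : ‖v i - v j‖ ^ 2 = 2 := by
    rw [@norm_sub_sq 𝕜, hv.1 i, hv.1 j, hv.2 hij]; norm_num
  rw [dist_eq_norm]
  nlinarith [norm_nonneg (v i - v j)]

def IsParsevalFrame (𝕜 : Type*) {E : Type*} [RCLike 𝕜] [NormedAddCommGroup E]
    [InnerProductSpace 𝕜 E] (u : ℕ → E) : Prop :=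
  ∀ h, HasSum (fun n => inner 𝕜 (u n) h • u n) h

theorem HilbertBasis.isParsevalFrame_extend {𝕜 E ι : Type*} [RCLike 𝕜] [NormedAddCommGroup E]
    [InnerProductSpace 𝕜 E] (b : HilbertBasis ι 𝕜 E) {g : ι → ℕ} (hg : g.Injective) :
    IsParsevalFrame 𝕜 (Function.extend g b 0) := by
  intro h
  have hterm : (fun n => inner 𝕜 (Function.extend g b 0 n) h • Function.extend g b 0 n) =
      Function.extend g (fun i => inner 𝕜 (b i) h • b i) 0 := by
    funext n
    rw [Function.apply_extend (fun y => inner 𝕜 y h • y)]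
    simp [Function.comp_def, Pi.zero_def]
  rw [hterm, hasSum_extend_zero hg]
  simpa only [HilbertBasis.repr_apply_apply] using b.hasSum_repr h

theorem exists_isParsevalFrame (𝕜 E : Type*) [RCLike 𝕜] [NormedAddCommGroup E]
    [InnerProductSpace 𝕜 E] [CompleteSpace E] [TopologicalSpace.SeparableSpace E] :
    ∃ u : ℕ → E, IsParsevalFrame 𝕜 u := by
  obtain ⟨w, b, -⟩ := exists_hilbertBasis 𝕜 E
  have : Countable w := b.orthonormal.countable
  have : Encodable w := Encodable.ofCountable w
  exact ⟨_, b.isParsevalFrame_extend Encodable.encode_injective⟩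

theorem Submodule.topologicalClosure_span_range_eq_top_of_hasSum {R M ι : Type*} [Semiring R]
    [TopologicalSpace R] [AddCommMonoid M] [TopologicalSpace M] [Module R M] [ContinuousAdd M]
    [ContinuousSMul R M] {x : ι → M} (c : ι → M → R) (h : ∀ v, HasSum (fun n => c n v • x n) v) :
    (span R (Set.range x)).topologicalClosure = ⊤ := by
  refine eq_top_iff'.2 fun v => mem_closure_of_tendsto (h v) (Eventually.of_forall fun s => ?_)
  exact sum_mem fun n _ => smul_mem _ _ (subset_span ⟨n, rfl⟩)

section Pullback

variable {Z H : Type*} [NormedAddCommGroup Z] [NormedSpace ℝ Z] [NormedAddCommGroup H]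
  [InnerProductSpace ℝ H] [CompleteSpace H]

noncomputable def innerDualEquiv (ε : Z ≃L[ℝ] H) : H ≃L[ℝ] (Z →L[ℝ] ℝ) :=
  (InnerProductSpace.toDual ℝ H).toContinuousLinearEquiv.trans
    (ε.arrowCongr (ContinuousLinearEquiv.refl ℝ ℝ)).symm

@[simp]
theorem innerDualEquiv_apply (ε : Z ≃L[ℝ] H) (h : H) (z : Z) : innerDualEquiv ε h z = ⟪h, ε z⟫ :=
  rfl

noncomputable def innerPullback (ε : Z ≃L[ℝ] H) : Z →L[ℝ] Z →L[ℝ] ℝ :=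
  (ε.trans (innerDualEquiv ε)).toContinuousLinearMap

@[simp]
theorem innerPullback_symm_apply (ε : Z ≃L[ℝ] H) (h : H) :
    innerPullback ε (ε.symm h) = innerDualEquiv ε h := by
  simp [innerPullback]

theorem IsParsevalFrame.hasSum_innerPullback {u : ℕ → H} (hu : IsParsevalFrame ℝ u)
    (ε : Z ≃L[ℝ] H) (v : Z) :
    HasSum (fun n => innerPullback ε (ε.symm (u n)) v • ε.symm (u n)) v := by
  simpa using (hu (ε v)).mapL (ε.symm : H →L[ℝ] Z)

end Pullback

theorem isomorphic_hilbert_has_hsf_with_dual_frame_general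
    {X : Type*} [NormedAddCommGroup X] [NormedSpace ℝ X]
    [TopologicalSpace.SeparableSpace X]
    (H : Type*) [NormedAddCommGroup H] [InnerProductSpace ℝ H] [CompleteSpace H]
    (e : X ≃L[ℝ] H) :
    ∃ (x : ℕ → X) (f : ℕ → X →L[ℝ] ℝ) (S : X →L[ℝ] X →L[ℝ] ℝ),
      SchauderFrame x f ∧ (∀ n, S (x n) = f n) ∧
      ∃ (T : (closedSpan fun n => S (x n)) →L[ℝ]
            ((closedSpan fun n => S (x n)) →L[ℝ] ℝ))
        (g : ℕ → (closedSpan fun n => S (x n))),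
        (∀ n, (g n : X →L[ℝ] ℝ) = S (x n)) ∧
        ∀ h : (closedSpan fun n => S (x n)),
          Tendsto (fun N => ∑ n ∈ Finset.range N, T (g n) h • g n) atTop (𝓝 h) := by
  have : TopologicalSpace.SeparableSpace H := e.surjective.denseRange.separableSpace e.continuous
  obtain ⟨u, hu⟩ := exists_isParsevalFrame ℝ H
  set S := innerPullback e
  set Y := closedSpan fun n => S (e.symm (u n))
  have hY : Y = ⊤ := by
    simpa [Y, S, closedSpan] using Submodule.topologicalClosure_span_range_eq_top_of_hasSum _
      (hu.hasSum_innerPullback (innerDualEquiv e).symm)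
  let εY : Y ≃L[ℝ] H := (ContinuousLinearEquiv.ofEq _ _ hY).trans
    (Submodule.topContEquiv.trans (innerDualEquiv e).symm)
  refine ⟨fun n => e.symm (u n), fun n => S (e.symm (u n)), S,
    fun v => (hu.hasSum_innerPullback e v).tendsto_sum_nat, fun _ => rfl,
    innerPullback (Z := Y) εY, fun n => εY.symm (u n),
    fun n => (innerPullback_symm_apply e (u n)).symm,
    -- `exact` gets lost unifying `closedSpan_addCommGroup` with the normed structure on `Y`
    fun h => by convert (hu.hasSum_innerPullback εY h).tendsto_sum_nat using 0⟩

/-- If a (separable) real Banach space `X` is isomorphic to a real Hilbert space `H`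
(via a continuous linear equivalence), then `X` admits a Hilbert-Schauder frame
`{(xₙ, fₙ)}` with HSf-operator `S` such that, with `Y` the norm-closed linear span of
`{S xₙ}` in `X*`, there is a bounded operator `T : Y → Y*` making `{(S xₙ, T(S xₙ))}`
a Schauder frame of `Y`. -/
theorem isomorphic_hilbert_has_hsf_with_dual_frame
    {X : Type*} [NormedAddCommGroup X] [NormedSpace ℝ X] [CompleteSpace X]
    [TopologicalSpace.SeparableSpace X]
    (H : Type*) [NormedAddCommGroup H] [InnerProductSpace ℝ H] [CompleteSpace H]
    (e : X ≃L[ℝ] H) :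
    ∃ (x : ℕ → X) (f : ℕ → X →L[ℝ] ℝ) (S : X →L[ℝ] X →L[ℝ] ℝ),
      SchauderFrame x f ∧ (∀ n, S (x n) = f n) ∧
      ∃ (T : (closedSpan fun n => S (x n)) →L[ℝ]
            ((closedSpan fun n => S (x n)) →L[ℝ] ℝ))
        (g : ℕ → (closedSpan fun n => S (x n))),
        (∀ n, (g n : X →L[ℝ] ℝ) = S (x n)) ∧
        ∀ h : (closedSpan fun n => S (x n)),
          Tendsto (fun N => ∑ n ∈ Finset.range N, T (g n) h • g n) atTop (𝓝 h) :=
  isomorphic_hilbert_has_hsf_with_dual_frame_general H e
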